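/- arXiv:1211.2339 — 2 statements merged into one kernel-verified Lean document; each statement's English description precedes it below -/
import Mathlib

section
/- Let K be a compact Hausdorff space, B the open unit ball of the complex Banach space C(K), and f₀ ∈ B. Then the map T : B → C(K), T(f) = (f - f₀)/(1 - conj(f₀)·f), is Fréchet differentiable in the complex sense at every f ∈ B, with derivative the bounded linear map L : C(K) → C(K) given by L(h) = ((1 - |f₀|²)/(1 - conj(f₀)·f)²)·h. -/
/-!
On the unit ball, `T` is the Möbius map `g ↦ (g - f₀) * (1 - f₀⋆ g)⁻¹` of the Banach algebra
`C(K)`, the inverse existing because `‖f₀⋆ g‖ < 1`. In any commutative Banach algebra the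
product rule and the derivative `h ↦ -u⁻¹ h u⁻¹` of inversion give the derivative of
`y ↦ (y - a)(1 - b y)⁻¹` at `x` as `h ↦ (1 - b x + (x - a) b) u⁻² h = (1 - b a) u⁻² h`,
with `u = 1 - b x`.
-/

open Metric Filter Topology

namespace ClusterValue

variable (X : Type*) [NormedAddCommGroup X] [NormedSpace ℂ X]

/-- Membership in `A_u(B)`: analytic on the open unit ball, bounded there,
and uniformly continuous there. -/
def MemAu (f : X → ℂ) : Prop :=
  AnalyticOn ℂ f (ball (0 : X) 1) ∧ (∃ C : ℝ, ∀ x ∈ ball (0 : X) 1, ‖f x‖ ≤ C) ∧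
    UniformContinuousOn f (ball (0 : X) 1)

/-- Membership in `H^∞(B)`: analytic on the open unit ball and bounded there. -/
def MemHinf (f : X → ℂ) : Prop :=
  AnalyticOn ℂ f (ball (0 : X) 1) ∧ (∃ C : ℝ, ∀ x ∈ ball (0 : X) 1, ‖f x‖ ≤ C)

/-- A character (nonzero continuous multiplicative linear functional) of the algebra
of functions on the open unit ball of `X` determined by the membership predicate `Mem`.
Functions are identified when they agree on the ball. -/
structure Character (Mem : (X → ℂ) → Prop) : Type _ where
  toFun : (X → ℂ) → ℂ
  congr' : ∀ f g, Mem f → Mem g → (∀ x ∈ ball (0 : X) 1, f x = g x) → toFun f = toFun g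
  map_add' : ∀ f g, Mem f → Mem g → toFun (f + g) = toFun f + toFun g
  map_mul' : ∀ f g, Mem f → Mem g → toFun (f * g) = toFun f * toFun g
  map_smul' : ∀ (c : ℂ) (f), Mem f → toFun (c • f) = c * toFun f
  map_one' : toFun 1 = 1
  continuous' : ∃ C : ℝ, ∀ (f : X → ℂ) (M : ℝ), Mem f →
    (∀ x ∈ ball (0 : X) 1, ‖f x‖ ≤ M) → ‖toFun f‖ ≤ C * M

variable {X}

/-- The fiber over `0`: characters annihilating all continuous linear functionals. -/
def Character.inFiberZero {Mem : (X → ℂ) → Prop} (τ : Character X Mem) : Prop :=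
  ∀ φ : X →L[ℂ] ℂ, τ.toFun ⇑φ = 0

/-- The fiber over `x'' ∈ X**`. -/
def Character.inFiber {Mem : (X → ℂ) → Prop} (τ : Character X Mem)
    (x'' : (X →L[ℂ] ℂ) →L[ℂ] ℂ) : Prop :=
  ∀ φ : X →L[ℂ] ℂ, τ.toFun ⇑φ = x'' φ

variable (X)

/-- The cluster set of `f` at `0`: limits of `f` along weakly null nets (filters) in the ball. -/
def clusterSetZero (f : X → ℂ) : Set ℂ :=
  {z | ∃ l : Filter X, l.NeBot ∧ l ≤ 𝓟 (ball (0 : X) 1) ∧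
    (∀ φ : X →L[ℂ] ℂ, Tendsto (fun x => φ x) l (𝓝 0)) ∧ Tendsto f l (𝓝 z)}

/-- The cluster set of `f` at `x'' ∈ X**`: limits of `f` along nets in the ball converging
weak-star to `x''`. -/
def clusterSet (f : X → ℂ) (x'' : (X →L[ℂ] ℂ) →L[ℂ] ℂ) : Set ℂ :=
  {z | ∃ l : Filter X, l.NeBot ∧ l ≤ 𝓟 (ball (0 : X) 1) ∧
    (∀ φ : X →L[ℂ] ℂ, Tendsto (fun x => φ x) l (𝓝 (x'' φ))) ∧ Tendsto f l (𝓝 z)}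

/-- A finite rank (bounded linear) operator. -/
def FiniteRank (S : X →L[ℂ] X) : Prop :=
  FiniteDimensional ℂ ↥(LinearMap.range (S : X →ₗ[ℂ] X))

/-- Finite type polynomials: the subalgebra of functions generated by the
continuous linear functionals (and constants). -/
def IsFiniteTypePoly (p : X → ℂ) : Prop :=
  p ∈ Algebra.adjoin ℂ (Set.range fun φ : X →L[ℂ] ℂ => (⇑φ : X → ℂ))

/-- Membership in `A(B)`: uniform limits on the ball of finite type polynomials. -/
def MemA (f : X → ℂ) : Prop :=
  ∀ ε > (0 : ℝ), ∃ p : X → ℂ, IsFiniteTypePoly X p ∧ ∀ x ∈ ball (0 : X) 1, ‖f x - p x‖ ≤ ε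

/-- A continuous polynomial: a finite sum of (diagonals of) continuous multilinear maps. -/
def IsContPoly (p : X → ℂ) : Prop :=
  ∃ (N : ℕ) (M : ∀ k : ℕ, ContinuousMultilinearMap ℂ (fun _ : Fin k => X) ℂ),
    ∀ x, p x = ∑ k ∈ Finset.range N, M k (fun _ => x)

end ClusterValue

open ContinuousLinearMap
open scoped Ring

section Mobius

variable {𝕜 R : Type*} [NontriviallyNormedField 𝕜] [NormedCommRing R] [HasSummableGeomSeries R]
  [NormedAlgebra 𝕜 R]

theorem hasFDerivAt_mobius {a b x : R} (hx : IsUnit (1 - b * x)) :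
    HasFDerivAt (fun y => (y - a) * (1 - b * y)⁻¹ʳ)
      (mul 𝕜 R ((1 - b * a) * (1 - b * x)⁻¹ʳ ^ 2)) x := by
  obtain ⟨u, hu⟩ := hx
  have hden : HasFDerivAt (fun y : R => 1 - b * y) (-mul 𝕜 R b) x :=
    (mul 𝕜 R b).hasFDerivAt.const_sub 1
  have hinv := (hu ▸ hasFDerivAt_ringInverse (𝕜 := 𝕜) u).comp x hden
  refine (((hasFDerivAt_id x).sub_const a).mul hinv).congr_fderiv ?_
  ext h
  have huv : (u : R) * ↑u⁻¹ = 1 := u.mul_inv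
  simp only [id_eq, comp_neg, neg_comp, neg_neg, Function.comp_apply, ← hu,
    Ring.inverse_invertible, invOf_units, add_apply, smul_apply, comp_apply, mul_apply',
    mulLeftRight_apply, smul_eq_mul, id_apply]
  linear_combination (-(h * ↑u⁻¹)) * huv + (↑u⁻¹ ^ 2 * h) * hu

end Mobius

theorem ContinuousMap.ringInverse_apply {X 𝕜 : Type*} [TopologicalSpace X] [NormedField 𝕜]
    {g : C(X, 𝕜)} (hg : IsUnit g) (t : X) : g⁻¹ʳ t = (g t)⁻¹ := by
  obtain ⟨u, rfl⟩ := hg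
  rw [Ring.inverse_unit]
  exact eq_inv_of_mul_eq_one_right <| by
    rw [← ContinuousMap.mul_apply, u.mul_inv, ContinuousMap.one_apply]

theorem isUnit_one_sub_star_mul {R : Type*} [NormedRing R] [HasSummableGeomSeries R] [StarRing R]
    [NormedStarGroup R] {a b : R} (ha : ‖a‖ ≤ 1) (hb : ‖b‖ < 1) : IsUnit (1 - star a * b) :=
  isUnit_one_sub_of_norm_lt_one <| calc
    ‖star a * b‖ ≤ ‖a‖ * ‖b‖ := by simpa using norm_mul_le (star a) b
    _ < 1 := by nlinarith [norm_nonneg a, norm_nonneg b]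

open Metric Filter Topology in
theorem statement16_general (K : Type*) [TopologicalSpace K] [CompactSpace K]
    (f₀ : C(K, ℂ)) (hf₀ : f₀ ∈ ball (0 : C(K, ℂ)) 1)
    (T : C(K, ℂ) → C(K, ℂ))
    (hT : ∀ g ∈ ball (0 : C(K, ℂ)) 1, ∀ t : K,
      T g t = (g t - f₀ t) / (1 - (starRingEnd ℂ) (f₀ t) * g t)) :
    ∀ f ∈ ball (0 : C(K, ℂ)) 1, ∃ L : C(K, ℂ) →L[ℂ] C(K, ℂ),
      (∀ (h : C(K, ℂ)) (t : K),
        L h t = ((1 - (starRingEnd ℂ) (f₀ t) * f₀ t) /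
          (1 - (starRingEnd ℂ) (f₀ t) * f t) ^ 2) * h t) ∧
      HasFDerivAt T L f := by
  intro f hf
  have hunit : ∀ g ∈ ball (0 : C(K, ℂ)) 1, IsUnit (1 - star f₀ * g) := fun g hg =>
    isUnit_one_sub_star_mul (mem_ball_zero_iff.mp hf₀).le (mem_ball_zero_iff.mp hg)
  refine ⟨mul ℂ _ ((1 - star f₀ * f₀) * (1 - star f₀ * f)⁻¹ʳ ^ 2), fun h t => ?_, ?_⟩
  · simp [ContinuousMap.ringInverse_apply (hunit f hf), div_eq_mul_inv]
  · refine (hasFDerivAt_mobius (hunit f hf)).congr_of_eventuallyEq ?_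
    filter_upwards [isOpen_ball.mem_nhds hf] with g hg
    ext t
    simp [hT g hg, ContinuousMap.ringInverse_apply (hunit g hg), div_eq_mul_inv]

open Metric Filter Topology in
/-- For `f₀` in the open unit ball `B` of `C(K)`, the map `T f = (f - f₀)/(1 - conj f₀ · f)`
is Fréchet differentiable in the complex sense at every `f ∈ B`, with derivative the bounded
linear map `L h = ((1 - |f₀|²)/(1 - conj f₀ · f)²) · h`. -/
theorem statement16 (K : Type*) [TopologicalSpace K] [CompactSpace K] [T2Space K]
    (f₀ : C(K, ℂ)) (hf₀ : f₀ ∈ ball (0 : C(K, ℂ)) 1)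
    (T : C(K, ℂ) → C(K, ℂ))
    (hT : ∀ g ∈ ball (0 : C(K, ℂ)) 1, ∀ t : K,
      T g t = (g t - f₀ t) / (1 - (starRingEnd ℂ) (f₀ t) * g t)) :
    ∀ f ∈ ball (0 : C(K, ℂ)) 1, ∃ L : C(K, ℂ) →L[ℂ] C(K, ℂ),
      (∀ (h : C(K, ℂ)) (t : K),
        L h t = ((1 - (starRingEnd ℂ) (f₀ t) * f₀ t) /
          (1 - (starRingEnd ℂ) (f₀ t) * f t) ^ 2) * h t) ∧
      HasFDerivAt T L f :=
  statement16_general K f₀ hf₀ T hT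
end

section
/- Let K be a compact Hausdorff space, B the open unit ball of the complex Banach space C(K), f₀ ∈ B, and T : B → B the biholomorphic map T(f) = (f - f₀)/(1 - conj(f₀)·f). Let H(B) denote either A_u(B) or H^∞(B). Then for every ψ ∈ H(B), ψ ∘ T ∈ H(B), so the induced map T̂ on the spectrum M_{H(B)} given by T̂(τ)(ψ) = τ(ψ ∘ T) is well defined, and T̂ maps the fiber 𝔐_{f₀}(B) := {τ ∈ M_{H(B)} : τ(ψ) = ψ(f₀) for all ψ ∈ A_u(B)} onto the fiber 𝔐₀(B) := {τ ∈ M_{H(B)} : τ(ψ) = ψ(0) for all ψ ∈ A_u(B)}. -/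
open Metric Filter Topology

/-!
On the ball, `T` agrees with `f ↦ (f - f₀) (1 - f̄₀ f)⁻¹`, computed in the Banach algebra
`C(K)`; this map is analytic because inversion is, and pointwise the classical estimates for
the disc automorphism `z ↦ (z - a) / (1 - ā z)` make it a Lipschitz self-map of the ball, with
inverse `f ↦ (f + f₀) / (1 + f̄₀ f)`. Composition with such a map preserves `A_u(B)` and
`H^∞(B)`, so `T̂ τ = τ ∘ (· ∘ T)` is a character. As `T f₀ = 0`, `T̂` sends `𝔐_{f₀}(B)` into
`𝔐₀(B)`, and the map induced by the inverse of `T` is a right inverse of `T̂` on `𝔐₀(B)`.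
-/

namespace Complex

open ComplexConjugate

variable {a z w : ℂ}

theorem one_sub_norm_le_norm_one_sub_conj_mul (hz : ‖z‖ ≤ 1) : 1 - ‖a‖ ≤ ‖1 - conj a * z‖ := by
  have hmul : ‖conj a * z‖ ≤ ‖a‖ := by
    rw [norm_mul, norm_conj]
    exact mul_le_of_le_one_right (norm_nonneg a) hz
  calc 1 - ‖a‖ ≤ ‖(1 : ℂ)‖ - ‖conj a * z‖ := by rw [norm_one]; linarith
    _ ≤ ‖1 - conj a * z‖ := norm_sub_norm_le _ _

theorem one_sub_conj_mul_ne_zero (ha : ‖a‖ < 1) (hz : ‖z‖ ≤ 1) : 1 - conj a * z ≠ 0 :=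
  norm_pos_iff.mp <| (sub_pos.mpr ha).trans_le (one_sub_norm_le_norm_one_sub_conj_mul hz)

theorem normSq_one_sub_conj_mul_sub_normSq_sub (a z : ℂ) :
    normSq (1 - conj a * z) - normSq (z - a) = (1 - normSq a) * (1 - normSq z) := by
  simp only [normSq_apply, sub_re, sub_im, mul_re, mul_im, conj_re, conj_im, one_re, one_im]
  ring

theorem norm_moebius_lt_one (ha : ‖a‖ < 1) (hz : ‖z‖ < 1) :
    ‖(z - a) / (1 - conj a * z)‖ < 1 := by
  have hden := one_sub_conj_mul_ne_zero ha hz.le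
  rw [norm_div, div_lt_one (norm_pos_iff.mpr hden), ← sq_lt_sq₀ (norm_nonneg _) (norm_nonneg _),
    Complex.sq_norm, Complex.sq_norm, ← sub_pos, normSq_one_sub_conj_mul_sub_normSq_sub,
    normSq_eq_norm_sq, normSq_eq_norm_sq]
  have h1 : ‖a‖ ^ 2 < 1 := by nlinarith [norm_nonneg a]
  have h2 : ‖z‖ ^ 2 < 1 := by nlinarith [norm_nonneg z]
  exact mul_pos (sub_pos.mpr h1) (sub_pos.mpr h2)

theorem moebius_sub_moebius (hz : 1 - conj a * z ≠ 0) (hw : 1 - conj a * w ≠ 0) :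
    (z - a) / (1 - conj a * z) - (w - a) / (1 - conj a * w) =
      (1 - conj a * a) * (z - w) / ((1 - conj a * z) * (1 - conj a * w)) := by
  rw [div_sub_div _ _ hz hw]
  ring

theorem norm_moebius_sub_moebius_le (ha : ‖a‖ < 1) (hz : ‖z‖ ≤ 1) (hw : ‖w‖ ≤ 1) :
    ‖(z - a) / (1 - conj a * z) - (w - a) / (1 - conj a * w)‖ ≤
      2 / (1 - ‖a‖) ^ 2 * ‖z - w‖ := by
  have hδ : 0 < 1 - ‖a‖ := sub_pos.mpr ha
  have hnum : ‖1 - conj a * a‖ ≤ 2 := by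
    calc ‖1 - conj a * a‖ ≤ ‖(1 : ℂ)‖ + ‖a‖ * ‖a‖ := by
          simpa only [norm_mul, norm_conj] using norm_sub_le (1 : ℂ) (conj a * a)
      _ ≤ 2 := by rw [norm_one]; nlinarith [norm_nonneg a]
  have hz' := one_sub_norm_le_norm_one_sub_conj_mul (a := a) hz
  have hw' := one_sub_norm_le_norm_one_sub_conj_mul (a := a) hw
  rw [moebius_sub_moebius (one_sub_conj_mul_ne_zero ha hz) (one_sub_conj_mul_ne_zero ha hw),
    norm_div, norm_mul, norm_mul, div_le_iff₀ (mul_pos (hδ.trans_le hz') (hδ.trans_le hw')), sq]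
  calc ‖1 - conj a * a‖ * ‖z - w‖ ≤ 2 * ‖z - w‖ := by gcongr
    _ = 2 / ((1 - ‖a‖) * (1 - ‖a‖)) * ‖z - w‖ * ((1 - ‖a‖) * (1 - ‖a‖)) := by
          field_simp
    _ ≤ _ := by gcongr

theorem moebius_moebius_neg (ha : ‖a‖ < 1) (hz : ‖z‖ < 1) :
    ((z + a) / (1 + conj a * z) - a) / (1 - conj a * ((z + a) / (1 + conj a * z))) = z := by
  have hz' : 1 + conj a * z ≠ 0 := by
    simpa using one_sub_conj_mul_ne_zero (a := -a) (by rwa [norm_neg]) hz.le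
  have haa : 1 - conj a * a ≠ 0 := one_sub_conj_mul_ne_zero ha ha.le
  have hnum : (z + a) / (1 + conj a * z) - a = z * (1 - conj a * a) / (1 + conj a * z) := by
    rw [eq_div_iff hz', sub_mul, div_mul_cancel₀ _ hz']
    ring
  have hden : 1 - conj a * ((z + a) / (1 + conj a * z)) = (1 - conj a * a) / (1 + conj a * z) := by
    rw [eq_div_iff hz', sub_mul, mul_assoc, div_mul_cancel₀ _ hz']
    ring
  rw [hnum, hden, div_div_div_cancel_right₀ hz', mul_div_cancel_right₀ _ haa]

end Complex

open Set ComplexConjugate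

namespace ClusterValue

variable {X : Type*} [NormedAddCommGroup X] [NormedSpace ℂ X]

theorem MemAu.memHinf {ψ : X → ℂ} (hψ : MemAu X ψ) : MemHinf X ψ :=
  ⟨hψ.1, hψ.2.1⟩

theorem mem_of_memAu {Mem : (X → ℂ) → Prop} (hMem : Mem = MemAu X ∨ Mem = MemHinf X)
    {ψ : X → ℂ} (hψ : MemAu X ψ) : Mem ψ := by
  rcases hMem with rfl | rfl
  exacts [hψ, hψ.memHinf]

theorem MemHinf.comp {ψ : X → ℂ} (hψ : MemHinf X ψ) {Φ : X → X}
    (hΦ : AnalyticOn ℂ Φ (ball 0 1)) (hmaps : MapsTo Φ (ball 0 1) (ball 0 1)) :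
    MemHinf X (ψ ∘ Φ) :=
  let ⟨hψa, C, hC⟩ := hψ
  ⟨hψa.comp hΦ hmaps, C, fun _ hx => hC _ (hmaps hx)⟩

/-- The self-maps of the ball along which composition preserves `A_u(B)` and `H^∞(B)`. -/
structure IsUniformHolomorphicSelfMap (Φ : X → X) : Prop where
  analyticOn : AnalyticOn ℂ Φ (ball 0 1)
  uniformContinuousOn : UniformContinuousOn Φ (ball 0 1)
  mapsTo : MapsTo Φ (ball 0 1) (ball 0 1)

theorem IsUniformHolomorphicSelfMap.congr {Φ Ψ : X → X} (hΦ : IsUniformHolomorphicSelfMap Φ)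
    (h : EqOn Φ Ψ (ball 0 1)) : IsUniformHolomorphicSelfMap Ψ where
  analyticOn := hΦ.analyticOn.congr h.symm
  uniformContinuousOn := hΦ.uniformContinuousOn.congr h
  mapsTo := hΦ.mapsTo.congr h

theorem MemAu.comp {ψ : X → ℂ} (hψ : MemAu X ψ) {Φ : X → X}
    (hΦ : IsUniformHolomorphicSelfMap Φ) : MemAu X (ψ ∘ Φ) :=
  let ⟨hψa, hψb, hψu⟩ := hψ
  let ⟨hΦa, hΦb⟩ := MemHinf.comp ⟨hψa, hψb⟩ hΦ.analyticOn hΦ.mapsTo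
  ⟨hΦa, hΦb, hψu.comp hΦ.uniformContinuousOn hΦ.mapsTo⟩

theorem IsUniformHolomorphicSelfMap.comp_mem {Mem : (X → ℂ) → Prop}
    (hMem : Mem = MemAu X ∨ Mem = MemHinf X) {Φ : X → X} (hΦ : IsUniformHolomorphicSelfMap Φ)
    {ψ : X → ℂ} (hψ : Mem ψ) : Mem (ψ ∘ Φ) := by
  rcases hMem with rfl | rfl
  exacts [hψ.comp hΦ, hψ.comp hΦ.analyticOn hΦ.mapsTo]

/-- The image `T̂ τ` of `τ` under the map of the spectrum induced by `T = Φ`. -/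
def Character.comp {Mem : (X → ℂ) → Prop} (τ : Character X Mem) (Φ : X → X)
    (hmaps : MapsTo Φ (ball 0 1) (ball 0 1)) (hcomp : ∀ ψ, Mem ψ → Mem (ψ ∘ Φ)) :
    Character X Mem where
  toFun ψ := τ.toFun (ψ ∘ Φ)
  congr' f g hf hg hfg :=
    τ.congr' _ _ (hcomp f hf) (hcomp g hg) fun _ hx => hfg _ (hmaps hx)
  map_add' f g hf hg := τ.map_add' _ _ (hcomp f hf) (hcomp g hg)
  map_mul' f g hf hg := τ.map_mul' _ _ (hcomp f hf) (hcomp g hg)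
  map_smul' c f hf := τ.map_smul' c _ (hcomp f hf)
  map_one' := τ.map_one'
  continuous' :=
    let ⟨C, hC⟩ := τ.continuous'
    ⟨C, fun ψ M hψ hM => hC _ M (hcomp ψ hψ) fun _ hx => hM _ (hmaps hx)⟩

end ClusterValue

namespace ContinuousMap

theorem ring_inverse_apply {K R : Type*} [TopologicalSpace K] [TopologicalSpace R]
    [DivisionRing R] [IsTopologicalRing R] {u : C(K, R)} (hu : IsUnit u) (t : K) :
    Ring.inverse u t = (u t)⁻¹ :=
  eq_inv_of_mul_eq_one_left <| by simpa using DFunLike.congr_fun (Ring.inverse_mul_cancel u hu) t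

variable {K : Type*} [TopologicalSpace K] {a f : C(K, ℂ)}

/-- `f ↦ (f - a) / (1 - conj a · f)` (see `moebius_apply`), written with `Ring.inverse` so that
its analyticity follows from that of inversion in the Banach algebra `C(K, ℂ)`. -/
noncomputable def moebius (a f : C(K, ℂ)) : C(K, ℂ) :=
  (f - a) * Ring.inverse (1 - star a * f)

theorem moebius_neg_zero (a : C(K, ℂ)) : moebius (-a) 0 = a := by
  simp [moebius]

variable [CompactSpace K]

theorem isUnit_one_sub_star_mul (ha : ‖a‖ < 1) (hf : ‖f‖ ≤ 1) : IsUnit (1 - star a * f) :=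
  (isUnit_iff_forall_ne_zero _).mpr fun t => Complex.one_sub_conj_mul_ne_zero
    ((norm_coe_le_norm a t).trans_lt ha) ((norm_coe_le_norm f t).trans hf)

theorem moebius_apply (ha : ‖a‖ < 1) (hf : ‖f‖ ≤ 1) (t : K) :
    moebius a f t = (f t - a t) / (1 - conj (a t) * f t) := by
  rw [moebius, mul_apply, ring_inverse_apply (isUnit_one_sub_star_mul ha hf), div_eq_mul_inv]
  rfl

theorem analyticOn_moebius (ha : ‖a‖ < 1) : AnalyticOn ℂ (moebius a) (ball 0 1) := by
  have hden : AnalyticOnNhd ℂ (fun f : C(K, ℂ) => 1 - star a * f) (ball 0 1) :=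
    analyticOnNhd_const.sub (analyticOnNhd_const.mul analyticOnNhd_id)
  have hinv := analyticOnNhd_inverse.comp hden fun f hf =>
    isUnit_one_sub_star_mul ha (mem_ball_zero_iff.mp hf).le
  exact (analyticOnNhd_id.sub analyticOnNhd_const).mul hinv |>.analyticOn

theorem mapsTo_moebius (ha : ‖a‖ < 1) : MapsTo (moebius a) (ball 0 1) (ball 0 1) := by
  intro f hf
  rw [mem_ball_zero_iff] at hf ⊢
  rw [norm_lt_iff _ one_pos]
  intro t
  rw [moebius_apply ha hf.le]
  exact Complex.norm_moebius_lt_one ((norm_coe_le_norm a t).trans_lt ha)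
    ((norm_coe_le_norm f t).trans_lt hf)

theorem lipschitzOnWith_moebius (ha : ‖a‖ < 1) :
    LipschitzOnWith (2 / (1 - ‖a‖) ^ 2).toNNReal (moebius a) (ball 0 1) := by
  have hδ : 0 < 1 - ‖a‖ := sub_pos.mpr ha
  refine LipschitzOnWith.of_dist_le_mul fun f hf g hg => ?_
  rw [mem_ball_zero_iff] at hf hg
  rw [Real.coe_toNNReal _ (by positivity), dist_eq_norm, dist_eq_norm]
  refine (norm_le _ (by positivity)).mpr fun t => ?_
  have hat := norm_coe_le_norm a t
  rw [sub_apply, moebius_apply ha hf.le, moebius_apply ha hg.le]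
  calc _ ≤ 2 / (1 - ‖a t‖) ^ 2 * ‖f t - g t‖ :=
        Complex.norm_moebius_sub_moebius_le (hat.trans_lt ha) ((norm_coe_le_norm f t).trans hf.le)
          ((norm_coe_le_norm g t).trans hg.le)
    _ ≤ 2 / (1 - ‖a‖) ^ 2 * ‖f - g‖ := by
        gcongr
        exact norm_coe_le_norm (f - g) t

theorem moebius_moebius_neg (ha : ‖a‖ < 1) (hf : f ∈ ball 0 1) :
    moebius a (moebius (-a) f) = f := by
  have hna : ‖-a‖ < 1 := by rwa [norm_neg]
  have hf' := mem_ball_zero_iff.mp hf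
  have hSf := mem_ball_zero_iff.mp (mapsTo_moebius hna hf)
  ext t
  rw [moebius_apply ha hSf.le, moebius_apply hna hf'.le]
  simpa only [neg_apply, sub_neg_eq_add, map_neg, neg_mul] using
    Complex.moebius_moebius_neg ((norm_coe_le_norm a t).trans_lt ha)
      ((norm_coe_le_norm f t).trans_lt hf')

theorem isUniformHolomorphicSelfMap_moebius (ha : ‖a‖ < 1) :
    ClusterValue.IsUniformHolomorphicSelfMap (moebius a) where
  analyticOn := analyticOn_moebius ha
  uniformContinuousOn := (lipschitzOnWith_moebius ha).uniformContinuousOn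
  mapsTo := mapsTo_moebius ha

end ContinuousMap

open Metric Filter Topology ClusterValue in
theorem statement18_general (K : Type*) [TopologicalSpace K] [CompactSpace K]
    (f₀ : C(K, ℂ)) (hf₀ : f₀ ∈ ball (0 : C(K, ℂ)) 1)
    (T : C(K, ℂ) → C(K, ℂ))
    (hT : ∀ f ∈ ball (0 : C(K, ℂ)) 1, ∀ t : K,
      T f t = (f t - f₀ t) / (1 - (starRingEnd ℂ) (f₀ t) * f t))
    -- `H(B)` denotes either `A_u(B)` or `H^∞(B)`
    (Mem : (C(K, ℂ) → ℂ) → Prop)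
    (hMem : Mem = MemAu C(K, ℂ) ∨ Mem = MemHinf C(K, ℂ)) :
    -- composition with `T` preserves the algebra `H(B)`
    (∀ ψ : C(K, ℂ) → ℂ, Mem ψ → Mem (fun f => ψ (T f))) ∧
    -- the induced map `T̂` is well defined on the spectrum of `H(B)`
    (∀ τ : Character C(K, ℂ) Mem, ∃ σ : Character C(K, ℂ) Mem,
      ∀ ψ : C(K, ℂ) → ℂ, Mem ψ → σ.toFun ψ = τ.toFun (fun f => ψ (T f))) ∧
    -- `T̂` maps the fiber `𝔐_{f₀}(B)` into the fiber `𝔐₀(B)`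
    (∀ τ : Character C(K, ℂ) Mem,
      (∀ ψ : C(K, ℂ) → ℂ, MemAu C(K, ℂ) ψ → τ.toFun ψ = ψ f₀) →
      ∀ σ : Character C(K, ℂ) Mem,
        (∀ ψ : C(K, ℂ) → ℂ, Mem ψ → σ.toFun ψ = τ.toFun (fun f => ψ (T f))) →
        ∀ ψ : C(K, ℂ) → ℂ, MemAu C(K, ℂ) ψ → σ.toFun ψ = ψ 0) ∧
    -- `T̂ : 𝔐_{f₀}(B) → 𝔐₀(B)` is onto
    (∀ σ : Character C(K, ℂ) Mem,
      (∀ ψ : C(K, ℂ) → ℂ, MemAu C(K, ℂ) ψ → σ.toFun ψ = ψ 0) →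
      ∃ τ : Character C(K, ℂ) Mem,
        (∀ ψ : C(K, ℂ) → ℂ, MemAu C(K, ℂ) ψ → τ.toFun ψ = ψ f₀) ∧
        ∀ ψ : C(K, ℂ) → ℂ, Mem ψ → σ.toFun ψ = τ.toFun (fun f => ψ (T f))) := by
  have hf₀' : ‖f₀‖ < 1 := mem_ball_zero_iff.mp hf₀
  have hTeq : EqOn (ContinuousMap.moebius f₀) T (ball 0 1) := fun f hf => by
    ext t
    rw [hT f hf t, ContinuousMap.moebius_apply hf₀' (mem_ball_zero_iff.mp hf).le]
  have hTf₀ : T f₀ = 0 := by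
    ext t
    simp [hT f₀ hf₀ t]
  have hT' := (ContinuousMap.isUniformHolomorphicSelfMap_moebius hf₀').congr hTeq
  set S := ContinuousMap.moebius (-f₀)
  have hS : IsUniformHolomorphicSelfMap S :=
    ContinuousMap.isUniformHolomorphicSelfMap_moebius (by rwa [norm_neg])
  have hTS : ∀ f ∈ ball (0 : C(K, ℂ)) 1, T (S f) = f := fun f hf => by
    rw [← hTeq (hS.mapsTo hf), ContinuousMap.moebius_moebius_neg hf₀' hf]
  refine ⟨fun _ => hT'.comp_mem hMem,
    fun τ => ⟨τ.comp T hT'.mapsTo fun _ => hT'.comp_mem hMem, fun _ _ => rfl⟩,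
    fun τ hτ σ hσ ψ hψ => ?_, fun σ hσ => ?_⟩
  · rw [hσ ψ (mem_of_memAu hMem hψ)]
    exact (hτ _ (hψ.comp hT')).trans (congrArg ψ hTf₀)
  · refine ⟨σ.comp S hS.mapsTo fun _ => hS.comp_mem hMem, fun ψ hψ => ?_, fun ψ hψ => ?_⟩
    · exact (hσ _ (hψ.comp hS)).trans (congrArg ψ (ContinuousMap.moebius_neg_zero f₀))
    · exact σ.congr' _ _ hψ (hS.comp_mem hMem (hT'.comp_mem hMem hψ))
        fun f hf => (congrArg ψ (hTS f hf)).symm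

open Metric Filter Topology ClusterValue in
/-- For `f₀` in the open unit ball `B` of `C(K)` and the biholomorphic map
`T f = (f - f₀)/(1 - conj f₀ · f)` of `B`, and `H(B)` either of the algebras `A_u(B)` or
`H^∞(B)`: composition with `T` preserves `H(B)`, the induced map `T̂` on the spectrum,
`T̂(τ)(ψ) = τ(ψ ∘ T)`, is well defined, and `T̂` maps the fiber `𝔐_{f₀}(B)` onto the
fiber `𝔐₀(B)`. -/
theorem statement18 (K : Type*) [TopologicalSpace K] [CompactSpace K] [T2Space K]
    (f₀ : C(K, ℂ)) (hf₀ : f₀ ∈ ball (0 : C(K, ℂ)) 1)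
    (T : C(K, ℂ) → C(K, ℂ))
    (hT : ∀ f ∈ ball (0 : C(K, ℂ)) 1, ∀ t : K,
      T f t = (f t - f₀ t) / (1 - (starRingEnd ℂ) (f₀ t) * f t))
    (hTmaps : Set.MapsTo T (ball (0 : C(K, ℂ)) 1) (ball (0 : C(K, ℂ)) 1))
    -- `H(B)` denotes either `A_u(B)` or `H^∞(B)`
    (Mem : (C(K, ℂ) → ℂ) → Prop)
    (hMem : Mem = MemAu C(K, ℂ) ∨ Mem = MemHinf C(K, ℂ)) :
    -- composition with `T` preserves the algebra `H(B)`
    (∀ ψ : C(K, ℂ) → ℂ, Mem ψ → Mem (fun f => ψ (T f))) ∧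
    -- the induced map `T̂` is well defined on the spectrum of `H(B)`
    (∀ τ : Character C(K, ℂ) Mem, ∃ σ : Character C(K, ℂ) Mem,
      ∀ ψ : C(K, ℂ) → ℂ, Mem ψ → σ.toFun ψ = τ.toFun (fun f => ψ (T f))) ∧
    -- `T̂` maps the fiber `𝔐_{f₀}(B)` into the fiber `𝔐₀(B)`
    (∀ τ : Character C(K, ℂ) Mem,
      (∀ ψ : C(K, ℂ) → ℂ, MemAu C(K, ℂ) ψ → τ.toFun ψ = ψ f₀) →
      ∀ σ : Character C(K, ℂ) Mem,
        (∀ ψ : C(K, ℂ) → ℂ, Mem ψ → σ.toFun ψ = τ.toFun (fun f => ψ (T f))) →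
        ∀ ψ : C(K, ℂ) → ℂ, MemAu C(K, ℂ) ψ → σ.toFun ψ = ψ 0) ∧
    -- `T̂ : 𝔐_{f₀}(B) → 𝔐₀(B)` is onto
    (∀ σ : Character C(K, ℂ) Mem,
      (∀ ψ : C(K, ℂ) → ℂ, MemAu C(K, ℂ) ψ → σ.toFun ψ = ψ 0) →
      ∃ τ : Character C(K, ℂ) Mem,
        (∀ ψ : C(K, ℂ) → ℂ, MemAu C(K, ℂ) ψ → τ.toFun ψ = ψ f₀) ∧
        ∀ ψ : C(K, ℂ) → ℂ, Mem ψ → σ.toFun ψ = τ.toFun (fun f => ψ (T f))) :=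
  statement18_general K f₀ hf₀ T hT Mem hMem
end
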